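/- Integrating the Bakry-Émery condition: if the Carré du champ iterate satisfies Γ₂(f) ≥ (1/n)(Δ_m f)² + K Γ(f) pointwise for all f ∈ L²(X,ν), then K·(n/(n−1))·H_m(f) ≤ ∫_X (Δ_m f)² dν for all f ∈ L²(X,ν). -/

import Mathlib

open MeasureTheory ENNReal

/-- The joint measure `dm_x(y) dν(x)` on `X × X`. -/
noncomputable def jointMeasure {X : Type*} [MeasurableSpace X] (ν : Measure X)
    (m : X → Measure X) : Measure (X × X) :=
  ν.bind (fun x => (m x).map (fun y => (x, y)))

/-- Reversibility of `ν` for the random walk `m`. -/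
def Reversible {X : Type*} [MeasurableSpace X] (ν : Measure X) (m : X → Measure X) : Prop :=
  (jointMeasure ν m).map Prod.swap = jointMeasure ν m

/-- The `m`-Laplacian `Δ_m f(x) = ∫ (f(y) - f(x)) dm_x(y)`. -/
noncomputable def lapRW {X : Type*} [MeasurableSpace X] (m : X → Measure X) (f : X → ℝ)
    (x : X) : ℝ :=
  (∫ y, f y ∂(m x)) - f x

/-- The carré du champ `Γ(f,g)(x) = (1/2) ∫ (f(y)-f(x))(g(y)-g(x)) dm_x(y)`. -/
noncomputable def carre {X : Type*} [MeasurableSpace X] (m : X → Measure X) (f g : X → ℝ)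
    (x : X) : ℝ :=
  (1/2) * ∫ y, (f y - f x) * (g y - g x) ∂(m x)

/-- The iterated carré du champ `Γ₂(f) = (1/2) Δ_m Γ(f) - Γ(f, Δ_m f)`. -/
noncomputable def carre2 {X : Type*} [MeasurableSpace X] (m : X → Measure X) (f : X → ℝ)
    (x : X) : ℝ :=
  (1/2) * lapRW m (fun z => carre m f f z) x - carre m f (lapRW m f) x

/-!
Integrating `Γ₂(f) ≥ (1/n)(Δf)² + K Γ(f)` against `ν` gives
`(1/n) ∫ (Δf)² + K H(f) ≤ ∫ Γ₂(f)`. Invariance of `ν` makes `∫ Δ Γ(f) = 0`, and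
reversibility, i.e. invariance of the joint law `ν ⊗ₘ m` of a step under swapping its
endpoints, yields the integration by parts `∫ Γ(f, g) = -∫ g Δf`. Hence
`∫ Γ₂(f) = -∫ Γ(f, Δf) = ∫ (Δf)²`, and for `n > 1` the inequality rearranges to
`K (n / (n - 1)) H(f) ≤ ∫ (Δf)²`.
-/

open ProbabilityTheory

theorem MeasureTheory.MeasurePreserving.integral_comp_of_aestronglyMeasurable
    {α β E : Type*} [MeasurableSpace α] [MeasurableSpace β] [NormedAddCommGroup E]
    [NormedSpace ℝ E] {μ : Measure α} {ν : Measure β} {f : α → β}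
    (hf : MeasurePreserving f μ ν) {g : β → E} (hg : AEStronglyMeasurable g ν) :
    ∫ x, g (f x) ∂μ = ∫ y, g y ∂ν := by
  rw [← hf.map_eq] at hg ⊢
  exact (integral_map hf.measurable.aemeasurable hg).symm

theorem sq_integral_le_integral_sq {Ω : Type*} [MeasurableSpace Ω] {μ : Measure Ω}
    [IsProbabilityMeasure μ] {f : Ω → ℝ} (hf : MemLp f 2 μ) :
    (∫ x, f x ∂μ) ^ 2 ≤ ∫ x, f x ^ 2 ∂μ := by
  have h := variance_nonneg f μ
  rw [variance_eq_sub hf] at h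
  simpa [sub_nonneg] using h

theorem jointMeasure_eq_compProd {X : Type*} [MeasurableSpace X] (ν : Measure X) [SFinite ν]
    (κ : Kernel X X) [IsSFiniteKernel κ] : jointMeasure ν κ = ν ⊗ₘ κ := by
  rw [Measure.compProd_eq_comp_prod, jointMeasure]
  congr 1
  funext x
  rw [Kernel.prod_apply, Kernel.id_apply, Measure.dirac_prod]

theorem carre_self {X : Type*} [MeasurableSpace X] (m : X → Measure X) (f : X → ℝ) (x : X) :
    carre m f f x = 1 / 2 * ∫ y, (f y - f x) ^ 2 ∂m x := by
  simp only [carre, sq]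

theorem mul_div_sub_one_mul_le {n K H I : ℝ} (hn : 1 < n) (h : 1 / n * I + K * H ≤ I) :
    K * (n / (n - 1)) * H ≤ I := by
  have hn₀ : 0 < n := by linarith
  have hn₁ : 0 < n - 1 := by linarith
  have hKH : K * H ≤ (n - 1) / n * I := by
    rw [sub_div, div_self hn₀.ne', sub_mul, one_mul]
    linarith
  calc K * (n / (n - 1)) * H = n / (n - 1) * (K * H) := by ring
    _ ≤ n / (n - 1) * ((n - 1) / n * I) := by gcongr
    _ = I := by field_simp

section MarkovKernel

variable {X : Type*} [MeasurableSpace X] {ν : Measure X} {κ : Kernel X X}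

theorem ProbabilityTheory.Kernel.Invariant.ae_memLp_two (hinv : κ.Invariant ν) {f : X → ℝ}
    (hf : MemLp f 2 ν) : ∀ᵐ x ∂ν, MemLp f 2 (κ x) := by
  have hmk : ∀ᵐ x ∂ν, f =ᵐ[κ x] hf.1.mk f :=
    Measure.ae_ae_of_ae_comp (by rw [hinv.def]; exact hf.1.ae_eq_mk)
  have hsq : ∀ᵐ x ∂ν, Integrable (fun y => f y ^ 2) (κ x) :=
    Measure.ae_integrable_of_integrable_comp (by rw [hinv.def]; exact hf.integrable_sq)
  filter_upwards [hmk, hsq] with x hx hx₂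
  exact (memLp_two_iff_integrable_sq ⟨_, hf.1.stronglyMeasurable_mk, hx⟩).2 hx₂

variable [SFinite ν] [IsMarkovKernel κ]

theorem measurePreserving_fst_compProd : MeasurePreserving Prod.fst (ν ⊗ₘ κ) ν :=
  ⟨measurable_fst, Measure.fst_compProd ν κ⟩

namespace ProbabilityTheory.Kernel.Invariant

theorem measurePreserving_snd_compProd (hinv : κ.Invariant ν) :
    MeasurePreserving Prod.snd (ν ⊗ₘ κ) ν :=
  ⟨measurable_snd, (Measure.snd_compProd ν κ).trans hinv⟩

theorem memLp_sub_compProd (hinv : κ.Invariant ν) {f : X → ℝ} {p : ℝ≥0∞}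
    (hf : MemLp f p ν) :
    MemLp (fun q : X × X => f q.2 - f q.1) p (ν ⊗ₘ κ) :=
  (hf.comp_measurePreserving hinv.measurePreserving_snd_compProd).sub
    (hf.comp_measurePreserving measurePreserving_fst_compProd)

theorem integrable_integral (hinv : κ.Invariant ν) {h : X → ℝ} (hh : Integrable h ν) :
    Integrable (fun x => ∫ y, h y ∂κ x) ν :=
  (hinv.measurePreserving_snd_compProd.integrable_comp_of_integrable hh).integral_compProd

theorem integral_integral (hinv : κ.Invariant ν) {h : X → ℝ} (hh : Integrable h ν) :
    ∫ x, ∫ y, h y ∂κ x ∂ν = ∫ x, h x ∂ν := by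
  have hsnd := hinv.measurePreserving_snd_compProd
  calc ∫ x, ∫ y, h y ∂κ x ∂ν = ∫ q, h q.2 ∂(ν ⊗ₘ κ) :=
        (Measure.integral_compProd (hsnd.integrable_comp_of_integrable hh)).symm
    _ = ∫ x, h x ∂ν := hsnd.integral_comp_of_aestronglyMeasurable hh.1

theorem integrable_lapRW (hinv : κ.Invariant ν) {h : X → ℝ} (hh : Integrable h ν) :
    Integrable (lapRW κ h) ν :=
  (hinv.integrable_integral hh).sub hh

theorem integral_lapRW_eq_zero (hinv : κ.Invariant ν) {h : X → ℝ} (hh : Integrable h ν) :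
    ∫ x, lapRW κ h x ∂ν = 0 := by
  unfold lapRW
  rw [integral_sub (hinv.integrable_integral hh) hh, hinv.integral_integral hh, sub_self]

theorem memLp_two_integral (hinv : κ.Invariant ν) {f : X → ℝ} (hf : MemLp f 2 ν) :
    MemLp (fun x => ∫ y, f y ∂κ x) 2 ν := by
  have hsnd := hinv.measurePreserving_snd_compProd
  have hmeas : AEStronglyMeasurable (fun x => ∫ y, f y ∂κ x) ν :=
    (hf.1.comp_measurePreserving hsnd).integral_kernel_compProd
  refine (memLp_two_iff_integrable_sq hmeas).2
    ((hinv.integrable_integral hf.integrable_sq).mono' (hmeas.pow 2) ?_)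
  filter_upwards [hinv.ae_memLp_two hf] with x hx
  rw [Real.norm_of_nonneg (sq_nonneg _)]
  exact sq_integral_le_integral_sq hx

theorem memLp_lapRW (hinv : κ.Invariant ν) {f : X → ℝ} (hf : MemLp f 2 ν) :
    MemLp (lapRW κ f) 2 ν :=
  (hinv.memLp_two_integral hf).sub hf

theorem integral_mul_sub_compProd (hinv : κ.Invariant ν) {u v : X → ℝ} (hu : MemLp u 2 ν)
    (hv : MemLp v 2 ν) :
    ∫ q, u q.1 * (v q.2 - v q.1) ∂(ν ⊗ₘ κ) = ∫ x, u x * lapRW κ v x ∂ν := by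
  have hint : Integrable (fun q : X × X => u q.1 * (v q.2 - v q.1)) (ν ⊗ₘ κ) :=
    (hu.comp_measurePreserving measurePreserving_fst_compProd).integrable_mul
      (hinv.memLp_sub_compProd hv)
  rw [Measure.integral_compProd hint]
  refine integral_congr_ae ?_
  filter_upwards [hinv.ae_memLp_two hv] with x hx
  rw [integral_const_mul, integral_sub (hx.integrable one_le_two) (integrable_const _),
    MeasureTheory.integral_const, probReal_univ, one_smul]
  rfl

theorem integrable_carre (hinv : κ.Invariant ν) {f g : X → ℝ} (hf : MemLp f 2 ν)
    (hg : MemLp g 2 ν) : Integrable (carre κ f g) ν :=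
  ((hinv.memLp_sub_compProd hf).integrable_mul
    (hinv.memLp_sub_compProd hg)).integral_compProd.const_mul _

theorem integral_carre (hinv : κ.Invariant ν)
    (hrev : MeasurePreserving Prod.swap (ν ⊗ₘ κ) (ν ⊗ₘ κ)) {f g : X → ℝ} (hf : MemLp f 2 ν)
    (hg : MemLp g 2 ν) : ∫ x, carre κ f g x ∂ν = -∫ x, g x * lapRW κ f x ∂ν := by
  have hD := hinv.memLp_sub_compProd hf
  have hg₁ : MemLp (fun q : X × X => g q.1) 2 (ν ⊗ₘ κ) :=
    hg.comp_measurePreserving measurePreserving_fst_compProd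
  have hg₂ : MemLp (fun q : X × X => g q.2) 2 (ν ⊗ₘ κ) :=
    hg.comp_measurePreserving hinv.measurePreserving_snd_compProd
  have hint₁ : Integrable (fun q : X × X => g q.2 * (f q.2 - f q.1)) (ν ⊗ₘ κ) :=
    hg₂.integrable_mul hD
  have hint₂ : Integrable (fun q : X × X => g q.1 * (f q.2 - f q.1)) (ν ⊗ₘ κ) :=
    hg₁.integrable_mul hD
  have hswap : ∫ q, g q.2 * (f q.2 - f q.1) ∂(ν ⊗ₘ κ)
      = -∫ q, g q.1 * (f q.2 - f q.1) ∂(ν ⊗ₘ κ) := by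
    -- the swap maps the increment `f q.2 - f q.1` to its negative
    rw [← hrev.integral_comp MeasurableEquiv.prodComm.measurableEmbedding, ← integral_neg]
    congr 1 with q
    simp only [Prod.fst_swap, Prod.snd_swap]
    ring
  have hint : Integrable (fun q : X × X => g q.2 * (f q.2 - f q.1) - g q.1 * (f q.2 - f q.1))
      (ν ⊗ₘ κ) := hint₁.sub hint₂
  calc ∫ x, carre κ f g x ∂ν
      = 1 / 2 * ∫ q, (g q.2 * (f q.2 - f q.1) - g q.1 * (f q.2 - f q.1)) ∂(ν ⊗ₘ κ) := by
        rw [Measure.integral_compProd hint, ← integral_const_mul]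
        refine integral_congr_ae (Filter.Eventually.of_forall fun x => ?_)
        simp only [carre]
        congr 2 with y
        ring
    _ = -∫ x, g x * lapRW κ f x ∂ν := by
        rw [integral_sub hint₁ hint₂, hswap, hinv.integral_mul_sub_compProd hg hf]
        ring

theorem integrable_carre2 (hinv : κ.Invariant ν) {f : X → ℝ} (hf : MemLp f 2 ν) :
    Integrable (carre2 κ f) ν :=
  ((hinv.integrable_lapRW (hinv.integrable_carre hf hf)).const_mul _).sub
    (hinv.integrable_carre hf (hinv.memLp_lapRW hf))

theorem integral_carre2 (hinv : κ.Invariant ν)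
    (hrev : MeasurePreserving Prod.swap (ν ⊗ₘ κ) (ν ⊗ₘ κ)) {f : X → ℝ} (hf : MemLp f 2 ν) :
    ∫ x, carre2 κ f x ∂ν = ∫ x, lapRW κ f x ^ 2 ∂ν := by
  have hΓ := hinv.integrable_carre hf hf
  unfold carre2
  rw [integral_sub ((hinv.integrable_lapRW hΓ).const_mul _)
      (hinv.integrable_carre hf (hinv.memLp_lapRW hf)),
    integral_const_mul, hinv.integral_lapRW_eq_zero hΓ,
    hinv.integral_carre hrev hf (hinv.memLp_lapRW hf)]
  simp only [sq, mul_zero, zero_sub, neg_neg]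

theorem integral_le_of_bakryEmery (hinv : κ.Invariant ν)
    (hrev : MeasurePreserving Prod.swap (ν ⊗ₘ κ) (ν ⊗ₘ κ)) {n K : ℝ} {f : X → ℝ}
    (hf : MemLp f 2 ν)
    (hBE : ∀ᵐ x ∂ν, 1 / n * lapRW κ f x ^ 2 + K * carre κ f f x ≤ carre2 κ f x) :
    1 / n * ∫ x, lapRW κ f x ^ 2 ∂ν + K * ∫ x, carre κ f f x ∂ν ≤ ∫ x, lapRW κ f x ^ 2 ∂ν := by
  have hΔ := ((hinv.memLp_lapRW hf).integrable_sq).const_mul (1 / n)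
  have hΓ := (hinv.integrable_carre hf hf).const_mul K
  calc 1 / n * ∫ x, lapRW κ f x ^ 2 ∂ν + K * ∫ x, carre κ f f x ∂ν
      = ∫ x, (1 / n * lapRW κ f x ^ 2 + K * carre κ f f x) ∂ν := by
        rw [integral_add hΔ hΓ, integral_const_mul, integral_const_mul]
    _ ≤ ∫ x, carre2 κ f x ∂ν := integral_mono_ae (hΔ.add hΓ) (hinv.integrable_carre2 hf) hBE
    _ = ∫ x, lapRW κ f x ^ 2 ∂ν := hinv.integral_carre2 hrev hf

end ProbabilityTheory.Kernel.Invariant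

end MarkovKernel

/-- Integrating the Bakry-Émery curvature-dimension condition `BE(K,n)`: if
`Γ₂(f) ≥ (1/n)(Δ_m f)² + K Γ(f)` for all `f ∈ L²(X,ν)`, then
`K (n/(n-1)) H_m(f) ≤ ∫ (Δ_m f)² dν` for all `f ∈ L²(X,ν)`. -/
theorem integrated_bakry_emery {X : Type*} [MeasurableSpace X]
    (ν : Measure X) [IsProbabilityMeasure ν] (m : X → Measure X)
    (hm : Measurable m) (hprob : ∀ x, IsProbabilityMeasure (m x))
    (hinv : ν.bind m = ν) (hrev : Reversible ν m)
    (n : ℝ) (hn : 1 < n) (K : ℝ)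
    (hBE : ∀ f : X → ℝ, MemLp f 2 ν →
      ∀ᵐ x ∂ν, (1/n) * (lapRW m f x)^2 + K * carre m f f x ≤ carre2 m f x) :
    ∀ f : X → ℝ, MemLp f 2 ν →
      K * (n / (n - 1)) * ((1/2) * ∫ x, (∫ y, (f y - f x)^2 ∂(m x)) ∂ν)
        ≤ ∫ x, (lapRW m f x)^2 ∂ν := by
  intro f hf
  let κ : Kernel X X := ⟨m, hm⟩
  have : IsMarkovKernel κ := ⟨hprob⟩
  have hinv : κ.Invariant ν := hinv
  have hrev : MeasurePreserving Prod.swap (ν ⊗ₘ κ) (ν ⊗ₘ κ) :=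
    ⟨measurable_swap, jointMeasure_eq_compProd ν κ ▸ hrev⟩
  have h := hinv.integral_le_of_bakryEmery hrev hf (hBE f hf)
  simp only [carre_self, integral_const_mul] at h
  exact mul_div_sub_one_mul_le hn h
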